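/- arXiv:2112.13233 — 7 statements merged into one kernel-verified Lean document; each statement's English description precedes it below -/
import Mathlib

section
/- Let (X,f) be a topological dynamical system and A ⊆ X a closed set. Then the following are equivalent: (1) A is a quasi-section; (2) the closure of O(x) meets A for every x ∈ X; (3) ω(x) ∩ A ≠ ∅ for every x ∈ X; (4) α(x) ∩ A ≠ ∅ for every x ∈ X; (5) A ∩ M ≠ ∅ for every minimal set M. -/
open Set

/-- The full orbit `{fⁿ(x) : n ∈ ℤ}` of a point under a homeomorphism. -/
def orbitZ {X : Type*} [TopologicalSpace X] (f : X ≃ₜ X) (x : X) : Set X :=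
  {y | ∃ n : ℤ, (f.toEquiv ^ n) x = y}

/-- `O(A) = ⋃_{n ∈ ℤ} fⁿ(A)`. -/
def orbitSetZ {X : Type*} [TopologicalSpace X] (f : X ≃ₜ X) (A : Set X) : Set X :=
  ⋃ n : ℤ, (f.toEquiv ^ n) '' A

/-- `O⁺(A) = ⋃_{n ≥ 0} fⁿ(A)`. -/
def orbitSetP {X : Type*} [TopologicalSpace X] (f : X ≃ₜ X) (A : Set X) : Set X :=
  ⋃ n : ℕ, (f.toEquiv ^ (n : ℤ)) '' A

/-- `O⁻(A) = ⋃_{n ≤ 0} fⁿ(A)`. -/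
def orbitSetN {X : Type*} [TopologicalSpace X] (f : X ≃ₜ X) (A : Set X) : Set X :=
  ⋃ n : ℕ, (f.toEquiv ^ (-(n : ℤ))) '' A

/-- The ω-limit set of a point. -/
def omegaSet {X : Type*} [TopologicalSpace X] (f : X ≃ₜ X) (x : X) : Set X :=
  ⋂ n : ℕ, closure {y | ∃ m : ℕ, n ≤ m ∧ (f.toEquiv ^ (m : ℤ)) x = y}

/-- The α-limit set of a point. -/
def alphaSet {X : Type*} [TopologicalSpace X] (f : X ≃ₜ X) (x : X) : Set X :=
  ⋂ n : ℕ, closure {y | ∃ m : ℕ, n ≤ m ∧ (f.toEquiv ^ (-(m : ℤ))) x = y}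

/-- A minimal set: nonempty, closed, invariant, and every orbit in it is dense in it. -/
def IsMinimalSet {X : Type*} [TopologicalSpace X] (f : X ≃ₜ X) (M : Set X) : Prop :=
  M.Nonempty ∧ IsClosed M ∧ f '' M = M ∧ ∀ x ∈ M, M ⊆ closure (orbitZ f x)

/-- `M_f`: the closure of the union of all minimal sets. -/
def minimalUnion {X : Type*} [TopologicalSpace X] (f : X ≃ₜ X) : Set X :=
  closure (⋃₀ {M | IsMinimalSet f M})

/-- A wandering point. -/
def IsWandering {X : Type*} [TopologicalSpace X] (f : X ≃ₜ X) (x : X) : Prop :=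
  ∃ U : Set X, IsOpen U ∧ x ∈ U ∧ ∀ n : ℤ, n ≠ 0 → (f.toEquiv ^ n) '' U ∩ U = ∅

/-- `Ω_f`: the set of non-wandering points. -/
def nonWandering {X : Type*} [TopologicalSpace X] (f : X ≃ₜ X) : Set X :=
  {x | ¬ IsWandering f x}

/-- A quasi-section: a closed set every open neighborhood of which has full orbit. -/
def IsQuasiSection {X : Type*} [TopologicalSpace X] (f : X ≃ₜ X) (A : Set X) : Prop :=
  IsClosed A ∧ ∀ U : Set X, IsOpen U → A ⊆ U → orbitSetZ f U = Set.univ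

/-- A minimal quasi-section (minimal w.r.t. inclusion among quasi-sections). -/
def IsMinimalQuasiSection {X : Type*} [TopologicalSpace X] (f : X ≃ₜ X) (A : Set X) : Prop :=
  IsQuasiSection f A ∧ ∀ B : Set X, IsQuasiSection f B → B ⊆ A → B = A

/-- A basic set: a quasi-section meeting every orbit in at most one point. -/
def IsBasicSet {X : Type*} [TopologicalSpace X] (f : X ≃ₜ X) (A : Set X) : Prop :=
  IsQuasiSection f A ∧ ∀ x : X, (orbitZ f x ∩ A).Subsingleton

/-- A minimal basic set (minimal w.r.t. inclusion among basic sets). -/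
def IsMinimalBasicSet {X : Type*} [TopologicalSpace X] (f : X ≃ₜ X) (A : Set X) : Prop :=
  IsBasicSet f A ∧ ∀ B : Set X, IsBasicSet f B → B ⊆ A → B = A

/-- Densely aperiodic: the points with infinite orbit are dense. -/
def DenselyAperiodic {X : Type*} [TopologicalSpace X] (f : X ≃ₜ X) : Prop :=
  Dense {x : X | (orbitZ f x).Infinite}

/-!
Every nonempty closed invariant set contains a minimal set (Zorn's lemma, with compactness
bounding chains), and ω- and α-limit sets are nonempty, closed and invariant. So (5) gives
(3) and (4), and these give (2) because limit sets lie in orbit closures. For (2) ⇒ (1), an open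
`U ⊇ A` meets every orbit closure, hence every orbit. For (1) ⇒ (5), the complement of a minimal
set `M` is open and invariant, so if it contained `A` its orbit would be itself rather than `X`.
-/

section

open Pointwise

variable {X : Type*} [TopologicalSpace X]

lemma Homeomorph.symm_toEquiv_zpow (f : X ≃ₜ X) (n : ℤ) :
    f.symm.toEquiv ^ n = f.toEquiv ^ (-n) := by
  rw [zpow_neg, ← inv_zpow]
  rfl

lemma zpow_image_of_image_eq (f : X ≃ₜ X) {M : Set X} (h : f '' M = M) (n : ℤ) :
    (f.toEquiv ^ n) '' M = M := by
  have hf : f.toEquiv ∈ MulAction.stabilizer (Equiv.Perm X) M := by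
    rw [MulAction.mem_stabilizer_iff, ← Set.image_smul]
    exact h
  have := (MulAction.stabilizer (Equiv.Perm X) M).zpow_mem hf n
  rwa [MulAction.mem_stabilizer_iff, ← Set.image_smul] at this

lemma orbitZ_subset_of_image_eq (f : X ≃ₜ X) {M : Set X} (h : f '' M = M) {x : X}
    (hx : x ∈ M) : orbitZ f x ⊆ M := by
  rintro _ ⟨n, rfl⟩
  exact zpow_image_of_image_eq f h n ▸ mem_image_of_mem _ hx

lemma image_orbitZ (f : X ≃ₜ X) (x : X) : f '' orbitZ f x = orbitZ f x := by
  ext y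
  simp only [orbitZ, mem_image, mem_ofPred_eq]
  constructor
  · rintro ⟨_, ⟨n, rfl⟩, rfl⟩
    exact ⟨1 + n, by rw [zpow_add, zpow_one, Equiv.Perm.mul_apply]; rfl⟩
  · rintro ⟨n, rfl⟩
    refine ⟨_, ⟨-1 + n, rfl⟩, ?_⟩
    show (f.toEquiv ^ (1 : ℤ) * f.toEquiv ^ (-1 + n)) x = _
    rw [← zpow_add, add_neg_cancel_left]

lemma orbitZ_symm (f : X ≃ₜ X) (x : X) : orbitZ f.symm x = orbitZ f x := by
  ext y
  simp only [orbitZ, mem_ofPred_eq, Homeomorph.symm_toEquiv_zpow]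
  exact ⟨fun ⟨n, h⟩ ↦ ⟨-n, h⟩, fun ⟨n, h⟩ ↦ ⟨-n, by rwa [neg_neg]⟩⟩

lemma isMinimalSet_symm_iff (f : X ≃ₜ X) (M : Set X) :
    IsMinimalSet f.symm M ↔ IsMinimalSet f M := by
  suffices ∀ g : X ≃ₜ X, IsMinimalSet g M → IsMinimalSet g.symm M from
    ⟨fun h ↦ f.symm_symm ▸ this f.symm h, this f⟩
  rintro g ⟨hne, hcl, hinv, hdense⟩
  refine ⟨hne, hcl, ?_, fun x hx ↦ orbitZ_symm g x ▸ hdense x hx⟩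
  simpa using zpow_image_of_image_eq g hinv (-1)

lemma exists_isMinimalSet_subset [CompactSpace X] (f : X ≃ₜ X) {S : Set X} (hne : S.Nonempty)
    (hcl : IsClosed S) (hinv : f '' S = S) : ∃ M ⊆ S, IsMinimalSet f M := by
  let T : Set (Set X) := {M | M.Nonempty ∧ IsClosed M ∧ f '' M = M}
  have chain_bound : ∀ c ⊆ T, IsChain (· ⊆ ·) c → c.Nonempty → ∃ lb ∈ T, ∀ s ∈ c, lb ⊆ s := by
    intro c hcT hchain hcne
    have := hcne.to_subtype
    refine ⟨⋂₀ c, ⟨?_, isClosed_sInter fun M hM ↦ (hcT hM).2.1, ?_⟩,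
      fun _ ↦ sInter_subset_of_mem⟩
    · exact IsCompact.nonempty_sInter_of_directed_nonempty_isCompact_isClosed
        (IsChain.directedOn (r := fun s t : Set X ↦ s ⊇ t) hchain.symm) (fun M hM ↦ (hcT hM).1)
        (fun M hM ↦ (hcT hM).2.1.isCompact) (fun M hM ↦ (hcT hM).2.1)
    · rw [sInter_eq_iInter, image_iInter f.bijective]
      exact iInter_congr fun M ↦ (hcT M.2).2.2
  obtain ⟨M, hMS, hMmin⟩ := zorn_superset_nonempty T chain_bound S ⟨hne, hcl, hinv⟩
  obtain ⟨hMne, hMcl, hMinv⟩ := hMmin.prop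
  refine ⟨M, hMS, hMne, hMcl, hMinv, fun x hx ↦ hMmin.le_of_le ?_ ?_⟩
  · exact ⟨⟨x, subset_closure ⟨0, rfl⟩⟩, isClosed_closure,
      by rw [f.image_closure, image_orbitZ]⟩
  · exact closure_minimal (orbitZ_subset_of_image_eq f hMinv hx) hMcl

def forwardTail (f : X ≃ₜ X) (x : X) (n : ℕ) : Set X :=
  {y | ∃ m : ℕ, n ≤ m ∧ (f.toEquiv ^ (m : ℤ)) x = y}

lemma omegaSet_eq_iInter_closure_forwardTail (f : X ≃ₜ X) (x : X) :
    omegaSet f x = ⋂ n, closure (forwardTail f x n) :=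
  rfl

lemma antitone_closure_forwardTail (f : X ≃ₜ X) (x : X) :
    Antitone fun n ↦ closure (forwardTail f x n) :=
  fun _ _ hnk ↦ closure_mono fun _ ⟨m, hm, hy⟩ ↦ ⟨m, hnk.trans hm, hy⟩

lemma isClosed_omegaSet (f : X ≃ₜ X) (x : X) : IsClosed (omegaSet f x) :=
  isClosed_iInter fun _ ↦ isClosed_closure

lemma omegaSet_nonempty [CompactSpace X] (f : X ≃ₜ X) (x : X) : (omegaSet f x).Nonempty :=
  IsCompact.nonempty_iInter_of_sequence_nonempty_isCompact_isClosed _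
    (fun n ↦ antitone_closure_forwardTail f x n.le_succ)
    (fun n ↦ ⟨_, subset_closure ⟨n, le_rfl, rfl⟩⟩) isClosed_closure.isCompact
    fun _ ↦ isClosed_closure

lemma image_forwardTail (f : X ≃ₜ X) (x : X) (n : ℕ) :
    f '' forwardTail f x n = forwardTail f x (n + 1) := by
  have hstep (m : ℕ) : f ((f.toEquiv ^ (m : ℤ)) x) = (f.toEquiv ^ ((m + 1 : ℕ) : ℤ)) x := by
    rw [Nat.cast_succ, add_comm, zpow_add, zpow_one]
    rfl
  ext y
  constructor
  · rintro ⟨_, ⟨m, hm, rfl⟩, rfl⟩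
    exact ⟨m + 1, by omega, (hstep m).symm⟩
  · rintro ⟨_ | m, hm, rfl⟩
    · omega
    · exact ⟨_, ⟨m, by omega, rfl⟩, hstep m⟩

lemma image_omegaSet (f : X ≃ₜ X) (x : X) : f '' omegaSet f x = omegaSet f x := by
  rw [omegaSet_eq_iInter_closure_forwardTail, image_iInter f.bijective]
  simp_rw [f.image_closure, image_forwardTail]
  exact (antitone_closure_forwardTail f x).iInter_nat_add 1

lemma omegaSet_subset_closure_orbitZ (f : X ≃ₜ X) (x : X) :
    omegaSet f x ⊆ closure (orbitZ f x) :=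
  (iInter_subset _ 0).trans <| closure_mono fun _ ⟨m, _, hy⟩ ↦ ⟨m, hy⟩

lemma alphaSet_eq_omegaSet_symm (f : X ≃ₜ X) (x : X) : alphaSet f x = omegaSet f.symm x := by
  simp only [alphaSet, omegaSet, Homeomorph.symm_toEquiv_zpow]

lemma omegaSet_inter_nonempty_of_forall_isMinimalSet [CompactSpace X] (f : X ≃ₜ X) {A : Set X}
    (hA : ∀ M, IsMinimalSet f M → (A ∩ M).Nonempty) (x : X) : (omegaSet f x ∩ A).Nonempty := by
  obtain ⟨M, hMω, hM⟩ := exists_isMinimalSet_subset f (omegaSet_nonempty f x)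
    (isClosed_omegaSet f x) (image_omegaSet f x)
  obtain ⟨a, haA, haM⟩ := hA M hM
  exact ⟨a, hMω haM, haA⟩

lemma IsQuasiSection.inter_nonempty {f : X ≃ₜ X} {A M : Set X} (hA : IsQuasiSection f A)
    (hne : M.Nonempty) (hcl : IsClosed M) (hinv : f '' M = M) : (A ∩ M).Nonempty := by
  by_contra hAM
  have hAMc : A ⊆ Mᶜ := fun a ha hm ↦ hAM ⟨a, ha, hm⟩
  have hMc : orbitSetZ f Mᶜ = Mᶜ := by
    simp only [orbitSetZ, image_compl_eq (Equiv.bijective _), zpow_image_of_image_eq f hinv,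
      iUnion_const]
  obtain ⟨m, hm⟩ := hne
  exact (hMc ▸ hA.2 Mᶜ hcl.isOpen_compl hAMc ▸ mem_univ m) hm

lemma isQuasiSection_of_forall_closure_orbitZ_inter_nonempty (f : X ≃ₜ X) {A : Set X}
    (hA : IsClosed A) (h : ∀ x, (closure (orbitZ f x) ∩ A).Nonempty) : IsQuasiSection f A := by
  refine ⟨hA, fun U hU hAU ↦ eq_univ_of_forall fun x ↦ ?_⟩
  obtain ⟨a, ha, haA⟩ := h x
  obtain ⟨_, hU, n, rfl⟩ := mem_closure_iff.mp ha U hU (hAU haA)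
  refine mem_iUnion.mpr ⟨-n, _, hU, ?_⟩
  rw [← Equiv.Perm.mul_apply, ← zpow_add, neg_add_cancel, zpow_zero, Equiv.Perm.one_apply]

end

theorem stmt2_general {X : Type*} [TopologicalSpace X] [CompactSpace X] (f : X ≃ₜ X)
    (A : Set X) (hA : IsClosed A) :
    List.TFAE [IsQuasiSection f A,
      ∀ x : X, (closure (orbitZ f x) ∩ A).Nonempty,
      ∀ x : X, (omegaSet f x ∩ A).Nonempty,
      ∀ x : X, (alphaSet f x ∩ A).Nonempty,
      ∀ M : Set X, IsMinimalSet f M → (A ∩ M).Nonempty] := by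
  tfae_have 1 → 5 := fun h M ⟨hne, hcl, hinv, _⟩ ↦ h.inter_nonempty hne hcl hinv
  tfae_have 5 → 3 := omegaSet_inter_nonempty_of_forall_isMinimalSet f
  tfae_have 5 → 4 := fun h x ↦ alphaSet_eq_omegaSet_symm f x ▸
    omegaSet_inter_nonempty_of_forall_isMinimalSet f.symm
      (fun M hM ↦ h M ((isMinimalSet_symm_iff f M).mp hM)) x
  tfae_have 3 → 2 := fun h x ↦ (h x).mono (inter_subset_inter_left _
    (omegaSet_subset_closure_orbitZ f x))
  tfae_have 4 → 2 := fun h x ↦ (h x).mono (inter_subset_inter_left _ <| by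
    rw [alphaSet_eq_omegaSet_symm, ← orbitZ_symm f x]
    exact omegaSet_subset_closure_orbitZ f.symm x)
  tfae_have 2 → 1 := isQuasiSection_of_forall_closure_orbitZ_inter_nonempty f hA
  tfae_finish

theorem stmt2 {X : Type*} [TopologicalSpace X] [CompactSpace X] [T2Space X] [Nonempty X] (f : X ≃ₜ X)
    (A : Set X) (hA : IsClosed A) :
    List.TFAE [IsQuasiSection f A,
      ∀ x : X, (closure (orbitZ f x) ∩ A).Nonempty,
      ∀ x : X, (omegaSet f x ∩ A).Nonempty,
      ∀ x : X, (alphaSet f x ∩ A).Nonempty,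
      ∀ M : Set X, IsMinimalSet f M → (A ∩ M).Nonempty] :=
  stmt2_general f A hA
end

section
/- Let (X,f) be a topological dynamical system. Then every quasi-section contains a minimal quasi-section, i.e., a quasi-section that is minimal with respect to set inclusion among quasi-sections. -/
open Set

theorem stmt3 {X : Type*} [TopologicalSpace X] [CompactSpace X] [T2Space X] [Nonempty X] (f : X ≃ₜ X)
    (A : Set X) (hA : IsQuasiSection f A) :
    ∃ B : Set X, B ⊆ A ∧ IsMinimalQuasiSection f B := by
  obtain ⟨m, hmA, hm, hmin⟩ := zorn_superset_nonempty {B | B ⊆ A ∧ IsQuasiSection f B} (by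
    intro c hc hchain hne
    refine ⟨⋂₀ c, ⟨?_, ?_, ?_⟩, fun s hs => sInter_subset_of_mem hs⟩
    · obtain ⟨B, hB⟩ := hne
      exact (sInter_subset_of_mem hB).trans (hc hB).1
    · exact isClosed_sInter fun B hB => (hc hB).2.1
    · intro U hU hUsub
      -- find B ∈ c with B ⊆ U via compactness
      by_contra hcon
      have hall : ∀ B ∈ c, (B ∩ Uᶜ).Nonempty := by
        intro B hB
        by_contra h
        rw [Set.not_nonempty_iff_eq_empty, ← Set.disjoint_iff_inter_eq_empty,
          Set.disjoint_compl_right_iff_subset] at h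
        exact hcon ((hc hB).2.2 U hU h)
      have hdir : DirectedOn (· ⊇ ·) ((fun B => B ∩ Uᶜ) '' c) := by
        rintro _ ⟨B1, hB1, rfl⟩ _ ⟨B2, hB2, rfl⟩
        rcases hchain.total hB1 hB2 with h | h
        · exact ⟨B1 ∩ Uᶜ, ⟨B1, hB1, rfl⟩, subset_rfl,
            Set.inter_subset_inter_left _ h⟩
        · exact ⟨B2 ∩ Uᶜ, ⟨B2, hB2, rfl⟩, Set.inter_subset_inter_left _ h,
            subset_rfl⟩
      obtain ⟨B0, hB0⟩ := hne
      have : (⋂ B : c, ((B : Set X) ∩ Uᶜ)).Nonempty := by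
        have hne' : Nonempty c := ⟨⟨B0, hB0⟩⟩
        apply IsCompact.nonempty_iInter_of_directed_nonempty_isCompact_isClosed
        · rintro ⟨B1, hB1⟩ ⟨B2, hB2⟩
          rcases hchain.total hB1 hB2 with h | h
          · exact ⟨⟨B1, hB1⟩, subset_rfl, Set.inter_subset_inter_left _ h⟩
          · exact ⟨⟨B2, hB2⟩, Set.inter_subset_inter_left _ h, subset_rfl⟩
        · exact fun B => hall B B.2
        · exact fun B => ((hc B.2).2.1.inter hU.isClosed_compl).isCompact
        · exact fun B => (hc B.2).2.1.inter hU.isClosed_compl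
      obtain ⟨x, hx⟩ := this
      simp only [Set.mem_iInter, Set.mem_inter_iff, Set.mem_compl_iff] at hx
      have hxI : x ∈ ⋂₀ c := fun B hB => (hx ⟨B, hB⟩).1
      exact (hx ⟨B0, hB0⟩).2 (hUsub hxI))
    A ⟨subset_rfl, hA⟩
  exact ⟨m, hm.1, hm.2, fun B hB hBm =>
    hBm.antisymm (hmin ⟨hBm.trans hm.1, hB⟩ hBm)⟩
end

section
/- Let (X,f) be a densely aperiodic topological dynamical system. Then every minimal quasi-section has empty interior (i.e., is continuously decisive). -/
open Set

/-!
Let `G` be the interior of a minimal quasi-section `A`. By minimality, for every open `U` meeting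
`A` some orbit closure meets `A` only inside `U`. For `U = G` this orbit closure is covered by
finitely many translates of `G`, so the orbit returns to `G`: some `fⁿ` with `n ≠ 0` maps a point
of `G` into `G`, and by dense aperiodicity we may take that point `q` with `fⁿ q ≠ q`. For `U` a
neighbourhood of `q` disjoint from its `fⁿ`-image and mapped into `A` by `fⁿ`, a point `c` of `A` in
the orbit closure lies in `U`, hence so does `fⁿ c ∈ A`, which is absurd.
-/

open Topology

section

variable {X : Type*} [TopologicalSpace X] (f : X ≃ₜ X)

theorem continuous_zpow_toEquiv (n : ℤ) : Continuous ⇑(f.toEquiv ^ n) := by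
  let toPerm : (X ≃ₜ X) →* Equiv.Perm X := ⟨⟨Homeomorph.toEquiv, rfl⟩, fun _ _ => rfl⟩
  rw [show f.toEquiv ^ n = (f ^ n).toEquiv from (map_zpow toPerm f n).symm]
  exact (f ^ n).continuous

theorem zpow_apply_ne_self_of_infinite_orbitZ {x : X} (hx : (orbitZ f x).Infinite) {n : ℤ}
    (hn : n ≠ 0) : (f.toEquiv ^ n) x ≠ x := by
  intro hfix
  have hper : Function.Periodic (fun k : ℤ => (f.toEquiv ^ k) x) n := fun k => by
    simp only [zpow_add, Equiv.Perm.mul_apply, hfix]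
  apply hx
  change (range fun k : ℤ => (f.toEquiv ^ k) x).Finite
  rw [← hper.image_uIcc hn 0]
  exact (finite_uIcc _ _).image _

theorem mem_orbitSetZ_iff {U : Set X} {x : X} :
    x ∈ orbitSetZ f U ↔ ∃ n : ℤ, (f.toEquiv ^ n) x ∈ U := by
  simp only [orbitSetZ, mem_iUnion, mem_image]
  constructor
  · rintro ⟨n, y, hy, rfl⟩
    exact ⟨-n, by simpa [zpow_neg]⟩
  · rintro ⟨n, hn⟩
    exact ⟨-n, _, hn, by simp [zpow_neg]⟩

theorem mapsTo_zpow_closure_orbitZ (x : X) (n : ℤ) :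
    MapsTo (f.toEquiv ^ n) (closure (orbitZ f x)) (closure (orbitZ f x)) := by
  refine MapsTo.closure ?_ (continuous_zpow_toEquiv f n)
  rintro _ ⟨m, rfl⟩
  exact ⟨n + m, by rw [zpow_add, Equiv.Perm.mul_apply]⟩

theorem closure_orbitZ_subset_of_mem {x y : X} (hy : y ∈ closure (orbitZ f x)) :
    closure (orbitZ f y) ⊆ closure (orbitZ f x) :=
  closure_minimal (by rintro _ ⟨n, rfl⟩; exact mapsTo_zpow_closure_orbitZ f x n hy)
    isClosed_closure

theorem exists_zpow_apply_mem_of_closure_orbitZ_inter_nonempty {U : Set X} (hU : IsOpen U)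
    {x : X} (h : (closure (orbitZ f x) ∩ U).Nonempty) : ∃ n : ℤ, (f.toEquiv ^ n) x ∈ U := by
  obtain ⟨_, ⟨n, rfl⟩, hn⟩ := (closure_inter_open_nonempty_iff hU).1 h
  exact ⟨n, hn⟩

theorem IsQuasiSection.closure_orbitZ_inter_nonempty {A : Set X} (hA : IsQuasiSection f A)
    (x : X) : (closure (orbitZ f x) ∩ A).Nonempty := by
  by_contra h
  have hcover := hA.2 _ isClosed_closure.isOpen_compl
    fun a ha hax => h ⟨a, hax, ha⟩
  obtain ⟨n, hn⟩ := (mem_orbitSetZ_iff f).1 (hcover.symm ▸ mem_univ x)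
  exact hn (subset_closure ⟨n, rfl⟩)

theorem IsQuasiSection.of_forall_closure_orbitZ_inter_nonempty [CompactSpace X] {A B : Set X}
    (hA : IsQuasiSection f A) (hB : IsClosed B)
    (h : ∀ a ∈ A, (closure (orbitZ f a) ∩ B).Nonempty) : IsQuasiSection f B := by
  refine ⟨hB, fun U hU hBU => eq_univ_of_forall fun x => ?_⟩
  have hcover : A ⊆ ⋃ n : ℤ, (f.toEquiv ^ n) ⁻¹' U := fun a ha =>
    mem_iUnion.2 <| exists_zpow_apply_mem_of_closure_orbitZ_inter_nonempty f hU <|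
      (h a ha).mono (inter_subset_inter_right _ hBU)
  obtain ⟨F, hF⟩ := hA.1.isCompact.elim_finite_subcover _
    (fun n => hU.preimage (continuous_zpow_toEquiv f n)) hcover
  have hW : IsOpen (⋃ n ∈ F, (f.toEquiv ^ n) ⁻¹' U) :=
    isOpen_biUnion fun n _ => hU.preimage (continuous_zpow_toEquiv f n)
  obtain ⟨m, hm⟩ := (mem_orbitSetZ_iff f).1 (hA.2 _ hW hF ▸ mem_univ x)
  obtain ⟨n, -, hn⟩ := mem_iUnion₂.1 hm
  exact (mem_orbitSetZ_iff f).2 ⟨n + m, by rwa [zpow_add, Equiv.Perm.mul_apply]⟩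

theorem IsMinimalQuasiSection.exists_closure_orbitZ_inter_subset [CompactSpace X] {A U : Set X}
    (hA : IsMinimalQuasiSection f A) (hU : IsOpen U) (hAU : (A ∩ U).Nonempty) :
    ∃ a ∈ A, closure (orbitZ f a) ∩ A ⊆ U := by
  by_contra! h
  have hB : IsQuasiSection f (A \ U) :=
    hA.1.of_forall_closure_orbitZ_inter_nonempty f (hA.1.1.sdiff hU) fun a ha => by
      obtain ⟨x, ⟨hxa, hxA⟩, hxU⟩ := not_subset.1 (h a ha)
      exact ⟨x, hxa, hxA, hxU⟩
  obtain ⟨x, hxA, hxU⟩ := hAU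
  exact (hA.2 _ hB sdiff_subset ▸ hxA).2 hxU

theorem exists_ne_zero_zpow_apply_mem_of_closure_orbitZ_subset [CompactSpace X] {U : Set X}
    (hU : IsOpen U) {a : X} (h : closure (orbitZ f a) ⊆ orbitSetZ f U) :
    ∃ n : ℤ, n ≠ 0 ∧ (f.toEquiv ^ n) a ∈ U := by
  have hcover : closure (orbitZ f a) ⊆ ⋃ n : ℤ, (f.toEquiv ^ n) ⁻¹' U := fun c hc =>
    mem_iUnion.2 <| (mem_orbitSetZ_iff f).1 (h hc)
  obtain ⟨F, hF⟩ := isClosed_closure.isCompact.elim_finite_subcover _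
    (fun n => hU.preimage (continuous_zpow_toEquiv f n)) hcover
  obtain ⟨m, hm⟩ := Infinite.exists_notMem_finset (F.image fun k : ℤ => -k)
  obtain ⟨n, hnF, hn⟩ := mem_iUnion₂.1 <|
    hF (mapsTo_zpow_closure_orbitZ f a m (subset_closure ⟨0, rfl⟩))
  refine ⟨n + m, fun h0 => hm (Finset.mem_image.2 ⟨n, hnF, by omega⟩), ?_⟩
  rwa [zpow_add, Equiv.Perm.mul_apply]

theorem IsMinimalQuasiSection.exists_ne_zero_zpow_apply_mem [CompactSpace X] {A U : Set X}
    (hA : IsMinimalQuasiSection f A) (hU : IsOpen U) (hUA : U ⊆ A) (hne : U.Nonempty) :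
    ∃ x ∈ U, ∃ n : ℤ, n ≠ 0 ∧ (f.toEquiv ^ n) x ∈ U := by
  obtain ⟨a, haA, ha⟩ :=
    hA.exists_closure_orbitZ_inter_subset f hU (by simpa [inter_eq_right.2 hUA])
  have hcover : closure (orbitZ f a) ⊆ orbitSetZ f U := fun c hc => by
    obtain ⟨t, htc, htA⟩ := hA.1.closure_orbitZ_inter_nonempty f c
    exact (mem_orbitSetZ_iff f).2 <| exists_zpow_apply_mem_of_closure_orbitZ_inter_nonempty f hU
      ⟨t, htc, ha ⟨closure_orbitZ_subset_of_mem f hc htc, htA⟩⟩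
  exact ⟨a, ha ⟨subset_closure ⟨0, rfl⟩, haA⟩,
    exists_ne_zero_zpow_apply_mem_of_closure_orbitZ_subset f hU hcover⟩

theorem IsMinimalQuasiSection.not_mapsTo_of_zpow_apply_ne [CompactSpace X] [T2Space X]
    {A : Set X} (hA : IsMinimalQuasiSection f A) {q : X} (hq : q ∈ A) {n : ℤ}
    (hqn : (f.toEquiv ^ n) q ≠ q) {U : Set X} (hU : U ∈ 𝓝 q) :
    ¬ MapsTo (f.toEquiv ^ n) U A := by
  intro hUA
  obtain ⟨W₂, W₁, hW₂, hW₁, hqW₂, hqW₁, hW⟩ := t2_separation hqn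
  obtain ⟨V, hVsub, hV, hqV⟩ := mem_nhds_iff.1 hU
  let O := V ∩ W₁ ∩ (f.toEquiv ^ n) ⁻¹' W₂
  have hO : IsOpen O := (hV.inter hW₁).inter (hW₂.preimage (continuous_zpow_toEquiv f n))
  obtain ⟨a, -, ha⟩ :=
    hA.exists_closure_orbitZ_inter_subset f hO ⟨q, hq, ⟨hqV, hqW₁⟩, hqW₂⟩
  obtain ⟨c, hca, hcA⟩ := hA.1.closure_orbitZ_inter_nonempty f a
  have hcO : c ∈ O := ha ⟨hca, hcA⟩
  have hncO : (f.toEquiv ^ n) c ∈ O :=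
    ha ⟨mapsTo_zpow_closure_orbitZ f a n hca, hUA (hVsub hcO.1.1)⟩
  exact disjoint_left.1 hW hcO.2 hncO.1.2

end

theorem stmt6_general {X : Type*} [TopologicalSpace X] [CompactSpace X] [T2Space X] (f : X ≃ₜ X)
    (hf : DenselyAperiodic f)
    (A : Set X) (hA : IsMinimalQuasiSection f A) :
    interior A = ∅ := by
  by_contra hne
  obtain ⟨x, hx, n, hn, hnx⟩ := hA.exists_ne_zero_zpow_apply_mem f isOpen_interior
    interior_subset (nonempty_iff_ne_empty.2 hne)
  have hO : IsOpen (interior A ∩ (f.toEquiv ^ n) ⁻¹' interior A) :=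
    isOpen_interior.inter (isOpen_interior.preimage (continuous_zpow_toEquiv f n))
  obtain ⟨q, hq, hqO⟩ := hf.exists_mem_open hO ⟨x, hx, hnx⟩
  exact hA.not_mapsTo_of_zpow_apply_ne f (interior_subset hqO.1)
    (zpow_apply_ne_self_of_infinite_orbitZ f hq hn) (hO.mem_nhds hqO)
    fun _ hy => interior_subset hy.2

theorem stmt6 {X : Type*} [TopologicalSpace X] [CompactSpace X] [T2Space X] [Nonempty X] (f : X ≃ₜ X)
    (hf : DenselyAperiodic f)
    (A : Set X) (hA : IsMinimalQuasiSection f A) :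
    interior A = ∅ :=
  stmt6_general f hf A hA
end

section
/- Let (X,f) be a topological dynamical system. Then every basic set contains a minimal basic set, i.e., a basic set that is minimal with respect to set inclusion among basic sets. -/
open Set

theorem stmt8 {X : Type*} [TopologicalSpace X] [CompactSpace X] [T2Space X] [Nonempty X] (f : X ≃ₜ X)
    (A : Set X) (hA : IsBasicSet f A) :
    ∃ B : Set X, B ⊆ A ∧ IsMinimalBasicSet f B := by
  have H : ∀ c ⊆ {B | IsBasicSet f B ∧ B ⊆ A}, IsChain (· ⊆ ·) c → c.Nonempty →
      ∃ lb ∈ {B | IsBasicSet f B ∧ B ⊆ A}, ∀ s ∈ c, lb ⊆ s := by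
    rintro c hcS hchain ⟨s₀, hs₀⟩
    haveI : Nonempty c := ⟨⟨s₀, hs₀⟩⟩
    refine ⟨⋂₀ c, ⟨⟨⟨isClosed_sInter fun s hs => ((hcS hs).1.1).1, ?_⟩, ?_⟩,
      (sInter_subset_of_mem hs₀).trans (hcS hs₀).2⟩, fun s hs => sInter_subset_of_mem hs⟩
    · intro U hU hsub
      have key : ∃ s ∈ c, s ⊆ U := by
        by_contra h
        push_neg at h
        have hne : (⋂ s : c, ((s : Set X) \ U)).Nonempty := by
          apply IsCompact.nonempty_iInter_of_directed_nonempty_isCompact_isClosed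
          · rintro ⟨s, hs⟩ ⟨t, ht⟩
            rcases eq_or_ne s t with rfl | hst
            · exact ⟨⟨s, hs⟩, subset_rfl, subset_rfl⟩
            rcases hchain hs ht hst with hle | hle
            · exact ⟨⟨s, hs⟩, subset_rfl, diff_subset_diff_left hle⟩
            · exact ⟨⟨t, ht⟩, diff_subset_diff_left hle, subset_rfl⟩
          · rintro ⟨s, hs⟩
            obtain ⟨x, hx⟩ := not_subset.mp (h s hs)
            exact ⟨x, hx.1, hx.2⟩
          · rintro ⟨s, hs⟩
            exact (((hcS hs).1.1).1.sdiff hU).isCompact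
          · rintro ⟨s, hs⟩
            exact ((hcS hs).1.1).1.sdiff hU
        obtain ⟨x, hx⟩ := hne
        simp only [mem_iInter, mem_diff] at hx
        have hxm : x ∈ ⋂₀ c := fun s hs => (hx ⟨s, hs⟩).1
        exact (hx ⟨s₀, hs₀⟩).2 (hsub hxm)
      obtain ⟨s, hs, hsU⟩ := key
      exact ((hcS hs).1.1).2 U hU hsU
    · intro x
      exact ((hcS hs₀).1.2 x).anti (inter_subset_inter_right _ (sInter_subset_of_mem hs₀))
  obtain ⟨m, hmA, hmin⟩ := zorn_superset_nonempty {B | IsBasicSet f B ∧ B ⊆ A} H A ⟨hA, subset_rfl⟩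
  exact ⟨m, hmA, hmin.prop.1, fun B hB hBm =>
    hBm.antisymm (hmin.2 ⟨hB, hBm.trans hmA⟩ hBm)⟩
end

section
/- Let (X,f) be a densely aperiodic topological dynamical system with M_f = X (the closure of the union of all minimal sets equals X). Then every basic set has empty interior, i.e., is continuously decisive. -/
open Set

/-! If the interior `V` of a basic set `B` were nonempty, it would contain a point `y` of some
minimal set. Minimal points are recurrent (by compactness of the minimal set), so `fⁿ y ∈ V` for
some `n ≠ 0`, and the open set `V ∩ f⁻ⁿ V` is nonempty. Its points `z` and `fⁿ z` both lie in `B`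
and in one orbit, so `fⁿ z = z`: the nonempty open set `V ∩ f⁻ⁿ V` consists of periodic points,
contradicting dense aperiodicity. -/

open Pointwise

section

variable {X : Type*} [TopologicalSpace X] {f : X ≃ₜ X}

theorem Homeomorph.continuous_toEquiv_zpow (f : X ≃ₜ X) (n : ℤ) : Continuous (f.toEquiv ^ n) := by
  let toPerm : (X ≃ₜ X) →* Equiv.Perm X := ⟨⟨Homeomorph.toEquiv, rfl⟩, fun _ _ => rfl⟩
  have hpow : f.toEquiv ^ n = (f ^ n).toEquiv := (map_zpow toPerm f n).symm
  rw [hpow]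
  exact (f ^ n).continuous

theorem orbitZ_finite_of_zpow_apply_eq_self {x : X} {n : ℤ} (hn : n ≠ 0)
    (hnx : (f.toEquiv ^ n) x = x) : (orbitZ f x).Finite := by
  set p : ℤ := ((Function.minimalPeriod (f.toEquiv • ·) x : ℕ) : ℤ)
  have hp : 0 < p := by
    have hpn : p ∣ n := MulAction.zpow_smul_eq_iff_minimalPeriod_dvd.1 hnx
    have : p ≠ 0 := fun h => hn (zero_dvd_iff.1 (h ▸ hpn))
    omega
  refine ((finite_Ico 0 p).image fun k => (f.toEquiv ^ k) x).subset ?_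
  rintro _ ⟨m, rfl⟩
  exact ⟨m % p, ⟨Int.emod_nonneg m hp.ne', Int.emod_lt_of_pos m hp⟩,
    MulAction.zpow_smul_mod_minimalPeriod f.toEquiv x m⟩

theorem DenselyAperiodic.exists_zpow_apply_ne (hf : DenselyAperiodic f) {n : ℤ} (hn : n ≠ 0)
    {U : Set X} (hU : IsOpen U) (hne : U.Nonempty) : ∃ z ∈ U, (f.toEquiv ^ n) z ≠ z := by
  obtain ⟨z, hzU, hz⟩ := hf.inter_open_nonempty U hU hne
  exact ⟨z, hzU, fun hnz => hz (orbitZ_finite_of_zpow_apply_eq_self hn hnz)⟩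

theorem IsBasicSet.zpow_apply_eq_self {B : Set X} (hB : IsBasicSet f B) {x : X} {n : ℤ}
    (hx : x ∈ B) (hnx : (f.toEquiv ^ n) x ∈ B) : (f.toEquiv ^ n) x = x :=
  hB.2 x ⟨⟨n, rfl⟩, hnx⟩ ⟨⟨0, by simp⟩, hx⟩

theorem IsMinimalSet.zpow_apply_mem {M : Set X} (hM : IsMinimalSet f M) (n : ℤ) {x : X}
    (hx : x ∈ M) : (f.toEquiv ^ n) x ∈ M := by
  -- `f '' M = M` says that `f` lies in the stabilizer of `M`, a subgroup, so `fⁿ` does too.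
  have hfM : f.toEquiv ∈ MulAction.stabilizer (Equiv.Perm X) M := hM.2.2.1
  have := Set.smul_mem_smul_set (a := f.toEquiv ^ n) hx
  rwa [(Subgroup.zpow_mem _ hfM n : (f.toEquiv ^ n) • M = M)] at this

theorem IsMinimalSet.exists_zpow_apply_mem [CompactSpace X] {M V : Set X} (hM : IsMinimalSet f M)
    {y : X} (hyM : y ∈ M) (hV : IsOpen V) (hyV : y ∈ V) :
    ∃ n : ℤ, n ≠ 0 ∧ (f.toEquiv ^ n) y ∈ V := by
  by_contra! hret
  -- Each `fⁿ y` lies in some translate of `V` from a finite subcover, and no return pins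
  -- down `n` as the index of that translate: only finitely many `n` would be possible.
  have hcover : M ⊆ ⋃ m : ℤ, (f.toEquiv ^ (-m)) ⁻¹' V := fun z hz => by
    obtain ⟨_, hmV, m, rfl⟩ := mem_closure_iff.1 (hM.2.2.2 z hz hyM) V hV hyV
    exact mem_iUnion.2 ⟨-m, by rwa [neg_neg]⟩
  obtain ⟨t, ht⟩ := hM.2.1.isCompact.elim_finite_subcover _
    (fun m => hV.preimage (f.continuous_toEquiv_zpow (-m))) hcover
  refine infinite_univ (α := ℤ) (t.finite_toSet.subset fun j _ => ?_)
  obtain ⟨m, hm, hmV⟩ := mem_iUnion₂.1 (ht (hM.zpow_apply_mem j hyM))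
  rw [mem_preimage, ← Equiv.Perm.mul_apply, ← zpow_add] at hmV
  have : -m + j = 0 := by_contra fun h => hret _ h hmV
  rwa [show j = m by omega]

end

theorem stmt12_general {X : Type*} [TopologicalSpace X] [CompactSpace X] (f : X ≃ₜ X)
    (hf : DenselyAperiodic f) (hM : minimalUnion f = Set.univ)
    (B : Set X) (hB : IsBasicSet f B) :
    interior B = ∅ := by
  by_contra hne
  obtain ⟨y, hyB, M, hMmin, hyM⟩ := (dense_iff_closure_eq.2 hM).inter_open_nonempty _
    isOpen_interior (nonempty_iff_ne_empty.2 hne)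
  obtain ⟨n, hn, hnyB⟩ := hMmin.exists_zpow_apply_mem hyM isOpen_interior hyB
  obtain ⟨z, ⟨hzB, hnzB⟩, hz⟩ := hf.exists_zpow_apply_ne hn
    (isOpen_interior.inter (isOpen_interior.preimage (f.continuous_toEquiv_zpow n))) ⟨y, hyB, hnyB⟩
  exact hz (hB.zpow_apply_eq_self (interior_subset hzB) (interior_subset hnzB))

theorem stmt12 {X : Type*} [TopologicalSpace X] [CompactSpace X] [T2Space X] [Nonempty X] (f : X ≃ₜ X)
    (hf : DenselyAperiodic f) (hM : minimalUnion f = Set.univ)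
    (B : Set X) (hB : IsBasicSet f B) :
    interior B = ∅ :=
  stmt12_general f hf hM B hB
end

section
/- Let (X,f) be a densely aperiodic topological dynamical system with Ω_f = X (every point is non-wandering). Then every basic set has empty interior, i.e., is continuously decisive. -/
open Set

private lemma cont_pow_aux {X : Type*} [TopologicalSpace X] (f : X ≃ₜ X) :
    ∀ k : ℕ, Continuous ⇑(f.toEquiv ^ k)
  | 0 => by rw [pow_zero]; exact continuous_id
  | k + 1 => by
      rw [pow_succ, Equiv.Perm.coe_mul]
      exact (cont_pow_aux f k).comp f.continuous

private lemma cont_zpow {X : Type*} [TopologicalSpace X] (f : X ≃ₜ X) (n : ℤ) :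
    Continuous ⇑(f.toEquiv ^ n) := by
  cases n with
  | ofNat k =>
      rw [Int.ofNat_eq_natCast, zpow_natCast]
      exact cont_pow_aux f k
  | negSucc k =>
      rw [zpow_negSucc, ← inv_pow]
      have h : f.toEquiv⁻¹ = f.symm.toEquiv := Equiv.ext fun _ => rfl
      rw [h]
      exact cont_pow_aux f.symm (k + 1)

private lemma image_zpow_eq {X : Type*} [TopologicalSpace X] (f : X ≃ₜ X) (n : ℤ) (U : Set X) :
    (f.toEquiv ^ n) '' U = ⇑(f.toEquiv ^ (-n)) ⁻¹' U := by
  rw [Equiv.image_eq_preimage_symm, zpow_neg, ← Equiv.Perm.inv_def]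

private lemma orbit_finite {X : Type*} (g : Equiv.Perm X) (z : X) (n : ℤ) (hn : 0 < n)
    (hz : (g ^ n) z = z) : (Set.range fun k : ℤ => (g ^ k) z).Finite := by
  apply Set.Finite.subset ((Set.finite_Ico (0 : ℤ) n).image fun r => (g ^ r) z)
  rintro _ ⟨k, rfl⟩
  refine ⟨k % n, ⟨Int.emod_nonneg k hn.ne', Int.emod_lt_of_pos k hn⟩, ?_⟩
  show (g ^ (k % n)) z = (g ^ k) z
  have hk : g ^ k = g ^ (k % n) * (g ^ n) ^ (k / n) := by
    rw [← zpow_mul, ← zpow_add, Int.emod_add_mul_ediv k n]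
  rw [hk, Equiv.Perm.mul_apply,
    Equiv.Perm.zpow_apply_eq_self_of_apply_eq_self hz (k / n)]

theorem stmt14 {X : Type*} [TopologicalSpace X] [CompactSpace X] [T2Space X] [Nonempty X] (f : X ≃ₜ X)
    (hf : DenselyAperiodic f) (hO : nonWandering f = Set.univ)
    (B : Set X) (hB : IsBasicSet f B) :
    interior B = ∅ := by
  by_contra h
  rw [← Ne, ← Set.nonempty_iff_ne_empty] at h
  obtain ⟨x, hx⟩ := h
  set U := interior B with hUdef
  have hUB : U ⊆ B := interior_subset
  have key : ∀ n : ℤ, n ≠ 0 → (f.toEquiv ^ n) '' U ∩ U = ∅ := by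
    intro n hn
    by_contra hne
    rw [← Ne, ← Set.nonempty_iff_ne_empty] at hne
    have hopen : IsOpen ((f.toEquiv ^ n) '' U ∩ U) := by
      refine IsOpen.inter ?_ isOpen_interior
      rw [image_zpow_eq]
      exact (cont_zpow f (-n)).isOpen_preimage _ isOpen_interior
    obtain ⟨z, hzap, hz⟩ := hf.exists_mem_open hopen hne
    obtain ⟨⟨w, hwU, hwz⟩, hzU⟩ := hz
    have hwz' : (f.toEquiv ^ (-n)) z = w := by
      rw [← hwz, ← Equiv.Perm.mul_apply, ← zpow_add, neg_add_cancel, zpow_zero,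
        Equiv.Perm.one_apply]
    have hmemw : (f.toEquiv ^ (-n)) z ∈ orbitZ f z ∩ B := ⟨⟨-n, rfl⟩, hwz' ▸ hUB hwU⟩
    have hmemz : z ∈ orbitZ f z ∩ B := ⟨⟨0, by rw [zpow_zero]; rfl⟩, hUB hzU⟩
    have heq : (f.toEquiv ^ (-n)) z = z := hB.2 z hmemw hmemz
    have heq' : (f.toEquiv ^ n) z = z := by
      conv_lhs => rw [← heq]
      rw [← Equiv.Perm.mul_apply, ← zpow_add, add_neg_cancel, zpow_zero, Equiv.Perm.one_apply]
    have hfin : (Set.range fun k : ℤ => (f.toEquiv ^ k) z).Finite := by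
      rcases hn.lt_or_gt with hlt | hlt
      · exact orbit_finite f.toEquiv z (-n) (by omega) heq
      · exact orbit_finite f.toEquiv z n hlt heq'
    have horb : orbitZ f z = Set.range fun k : ℤ => (f.toEquiv ^ k) z := by
      ext y; simp [orbitZ, eq_comm]
    exact hzap (horb ▸ hfin)
  have hxw : IsWandering f x := ⟨U, isOpen_interior, hx, key⟩
  have hnx : x ∈ nonWandering f := by rw [hO]; trivial
  exact hnx hxw
end

section
/- Let X be a nonempty compact subset of ℝ and f : X → X a homeomorphism. Define inf_f(x) := inf{ y : y ∈ O(x) } for each x ∈ X. If x belongs to the set inf_f := { inf_f(y) : y ∈ X }, then inf_f(x) = x. -/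
open Set

/-!
If `x = inf O(y)`, then `x` lies in the closure of `O(y)` and bounds that closure from below.
The closure of an orbit is invariant, so it contains `O(x)`; hence `x` is the least element of
its own orbit.
-/

namespace Homeomorph

variable {Y : Type*} [TopologicalSpace Y]

theorem toEquiv_zpow (f : Y ≃ₜ Y) (n : ℤ) : (f ^ n).toEquiv = f.toEquiv ^ n :=
  map_zpow (⟨⟨toEquiv, rfl⟩, fun _ _ => rfl⟩ : (Y ≃ₜ Y) →* Equiv.Perm Y) f n

theorem continuous_toEquiv_zpow_s15 (f : Y ≃ₜ Y) (n : ℤ) : Continuous ⇑(f.toEquiv ^ n) := by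
  rw [← toEquiv_zpow]
  exact (f ^ n).continuous

end Homeomorph

section Orbit

variable {Y : Type*} [TopologicalSpace Y] (f : Y ≃ₜ Y)

theorem mem_orbitZ_self (x : Y) : x ∈ orbitZ f x :=
  ⟨0, rfl⟩

theorem mapsTo_orbitZ (y : Y) (n : ℤ) : MapsTo ⇑(f.toEquiv ^ n) (orbitZ f y) (orbitZ f y) := by
  rintro _ ⟨m, rfl⟩
  exact ⟨n + m, by rw [zpow_add, Equiv.Perm.mul_apply]⟩

theorem orbitZ_subset_closure_orbitZ {x y : Y} (hx : x ∈ closure (orbitZ f y)) :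
    orbitZ f x ⊆ closure (orbitZ f y) := by
  rintro _ ⟨n, rfl⟩
  exact (mapsTo_orbitZ f y n).closure (f.continuous_toEquiv_zpow_s15 n) hx

end Orbit

section SubtypeInf

variable {α : Type*} [ConditionallyCompleteLinearOrder α] [TopologicalSpace α] [OrderTopology α]
  {s : Set α} {A : Set s} {x : s}

theorem mem_closure_of_val_eq_csInf (hA : A.Nonempty) (hbdd : BddBelow ((↑) '' A : Set α))
    (hx : (x : α) = sInf ((↑) '' A)) : x ∈ closure A := by
  rw [Topology.IsInducing.subtypeVal.closure_eq_preimage_closure_image, mem_preimage, hx]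
  exact csInf_mem_closure (hA.image _) hbdd

theorem val_le_of_mem_closure_of_val_eq_csInf (hbdd : BddBelow ((↑) '' A : Set α))
    (hx : (x : α) = sInf ((↑) '' A)) {z : s} (hz : z ∈ closure A) : (x : α) ≤ z := by
  have hlb : (x : α) ∈ lowerBounds (closure ((↑) '' A)) := by
    rw [lowerBounds_closure, hx]
    exact fun _ ha => csInf_le hbdd ha
  exact hlb (image_closure_subset_closure_image continuous_subtype_val ⟨z, hz, rfl⟩)

end SubtypeInf

theorem stmt15_general (X : Set ℝ) (hX : IsCompact X)
    (f : X ≃ₜ X) (x : X)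
    (hx : ∃ y : X, (x : ℝ) = sInf ((↑) '' orbitZ f y)) :
    sInf ((↑) '' orbitZ f x) = (x : ℝ) := by
  obtain ⟨y, hxy⟩ := hx
  have hbdd : BddBelow ((↑) '' orbitZ f y : Set ℝ) :=
    hX.bddBelow.mono (Subtype.coe_image_subset X _)
  have hx_closure : x ∈ closure (orbitZ f y) :=
    mem_closure_of_val_eq_csInf ⟨y, mem_orbitZ_self f y⟩ hbdd hxy
  have hx_least : IsLeast ((↑) '' orbitZ f x) (x : ℝ) := by
    refine ⟨⟨x, mem_orbitZ_self f x, rfl⟩, ?_⟩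
    rintro _ ⟨z, hz, rfl⟩
    exact val_le_of_mem_closure_of_val_eq_csInf hbdd hxy
      (orbitZ_subset_closure_orbitZ f hx_closure hz)
  exact hx_least.csInf_eq

theorem stmt15 (X : Set ℝ) (hne : X.Nonempty) (hX : IsCompact X)
    (f : X ≃ₜ X) (x : X)
    (hx : ∃ y : X, (x : ℝ) = sInf ((↑) '' orbitZ f y)) :
    sInf ((↑) '' orbitZ f x) = (x : ℝ) :=
  stmt15_general X hX f x hx
end
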